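/- arXiv:2202.00356 — 4 statements merged into one kernel-verified Lean document; each statement's English description precedes it below -/
import Mathlib

section
/- If any two infinite closed subsets of a topological space X intersect (X is strongly anti-Urysohn), then every free sequence in X has order type less than ω + ω. -/
open Set

/-- A free sequence in `X` indexed by a linearly ordered type. -/
def IsFreeSeq {X : Type*} [TopologicalSpace X] {ι : Type*} [LinearOrder ι] (f : ι → X) : Prop :=
  Function.Injective f ∧
    ∀ β : ι, closure (f '' {a | a < β}) ∩ closure (f '' {a | β ≤ a}) = ∅

/-- in a strongly anti-Urysohn space (any two infinite closed sets meet),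
every free sequence has order type `< ω + ω`. -/
theorem freeSeq_orderType_lt_of_SAU {X : Type*} [TopologicalSpace X]
    (hSAU : ∀ F G : Set X, IsClosed F → IsClosed G → F.Infinite → G.Infinite →
      (F ∩ G).Nonempty)
    {ι : Type*} [LinearOrder ι] [IsWellOrder ι (· < ·)] (f : ι → X) (hf : IsFreeSeq f) :
    Ordinal.type ((· < ·) : ι → ι → Prop) < Ordinal.omega0 + Ordinal.omega0 := by
  by_contra hcon
  push_neg at hcon
  set r := ((· < ·) : ι → ι → Prop) with hr
  have hω : Ordinal.omega0 < Ordinal.type r := by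
    refine lt_of_lt_of_le ?_ hcon
    simpa using Ordinal.omega0_pos
  set β : ι := Ordinal.enum r ⟨Ordinal.omega0, hω⟩ with hβ
  have hn : ∀ n : ℕ, (n : Ordinal) < Ordinal.type r :=
    fun n => (Ordinal.nat_lt_omega0 n).trans hω
  have hωn : ∀ n : ℕ, Ordinal.omega0 + (n : Ordinal) < Ordinal.type r :=
    fun n => lt_of_lt_of_le ((add_lt_add_iff_left _).2 (Ordinal.nat_lt_omega0 n)) hcon
  have hA : ({a : ι | a < β}).Infinite := by
    refine Set.infinite_of_injective_forall_mem
      (f := fun n : ℕ => Ordinal.enum r ⟨(n : Ordinal), hn n⟩) ?_ ?_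
    · intro m n hmn
      have := (Ordinal.enum r).injective hmn
      simpa [Subtype.ext_iff] using this
    · intro n
      exact Ordinal.enum_lt_enum.2 (Subtype.mk_lt_mk.2 (Ordinal.nat_lt_omega0 n))
  have hB : ({a : ι | β ≤ a}).Infinite := by
    refine Set.infinite_of_injective_forall_mem
      (f := fun n : ℕ => Ordinal.enum r ⟨Ordinal.omega0 + (n : Ordinal), hωn n⟩) ?_ ?_
    · intro m n hmn
      have h := (Ordinal.enum r).injective hmn
      rw [Subtype.ext_iff] at h
      exact Nat.cast_injective (add_left_cancel h)
    · intro n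
      have h : ¬ r (Ordinal.enum r ⟨Ordinal.omega0 + (n : Ordinal), hωn n⟩) β :=
        (Ordinal.enum_le_enum r).2 (Subtype.mk_le_mk.2 le_self_add)
      exact not_lt.1 h
  have hF : (closure (f '' {a : ι | a < β})).Infinite :=
    (hA.image (hf.1.injOn)).mono subset_closure
  have hG : (closure (f '' {a : ι | β ≤ a})).Infinite :=
    (hB.image (hf.1.injOn)).mono subset_closure
  have := hSAU _ _ isClosed_closure isClosed_closure hF hG
  rw [hf.2 β] at this
  exact this.ne_empty rfl
end

section
/- If X is a strongly anti-Urysohn space, then the free set number of X is countable: every subset of X that is free in X is countable (indeed finite or of order type < ω+ω under any witnessing well-ordering). -/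
open Set

/-- A set `S` is free in `X` if it admits a well-ordering such that for every `b ∈ S`
the closure of the set of predecessors of `b` is disjoint from the closure of the set
of the remaining (non-smaller) elements. -/
def IsFreeSet {X : Type*} [TopologicalSpace X] (S : Set X) : Prop :=
  ∃ r : S → S → Prop, IsWellOrder S r ∧
    ∀ b : S, closure (Subtype.val '' {a | r a b}) ∩ closure (Subtype.val '' {a | ¬ r a b}) = ∅

/-- in a strongly anti-Urysohn space every free set is countable. -/
theorem freeSet_countable_of_SAU {X : Type*} [TopologicalSpace X]
    (hSAU : ∀ F G : Set X, IsClosed F → IsClosed G → F.Infinite → G.Infinite →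
      (F ∩ G).Nonempty)
    (S : Set X) (hS : IsFreeSet S) : S.Countable := by
  obtain ⟨r, hwo, hfree⟩ := hS
  haveI : IsWellOrder S r := hwo
  by_contra hc
  rw [← Set.countable_coe_iff] at hc
  -- T : elements with finitely many predecessors
  set T : Set S := {b | {a | r a b}.Finite} with hTdef
  have hTc : T.Countable := by
    have hinj : Function.Injective (fun b : T => (b.2 : {a | r a b.1}.Finite).toFinset.card) := by
      rintro ⟨b, hb⟩ ⟨c, hcc⟩ h
      simp only at h
      rcases (show r b c ∨ b = c ∨ r c b by have h3 := hwo.trichotomous b c; tauto) with hbc | heq | hcb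
      · exfalso
        have hss : hb.toFinset ⊂ hcc.toFinset := by
          constructor
          · intro a ha
            simp only [Set.Finite.mem_toFinset, Set.mem_setOf_eq] at *
            exact _root_.trans ha hbc
          · intro hsub
            have : b ∈ hb.toFinset := hsub (by
              simp only [Set.Finite.mem_toFinset, Set.mem_setOf_eq]; exact hbc)
            simp only [Set.Finite.mem_toFinset, Set.mem_setOf_eq] at this
            exact irrefl b this
        exact absurd h (Nat.ne_of_lt (Finset.card_lt_card hss))
      · exact Subtype.ext heq
      · exfalso
        have hss : hcc.toFinset ⊂ hb.toFinset := by
          constructor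
          · intro a ha
            simp only [Set.Finite.mem_toFinset, Set.mem_setOf_eq] at *
            exact _root_.trans ha hcb
          · intro hsub
            have : c ∈ hcc.toFinset := hsub (by
              simp only [Set.Finite.mem_toFinset, Set.mem_setOf_eq]; exact hcb)
            simp only [Set.Finite.mem_toFinset, Set.mem_setOf_eq] at this
            exact irrefl c this
        exact absurd h.symm (Nat.ne_of_lt (Finset.card_lt_card hss))
    exact Set.countable_coe_iff.mp (Function.Injective.countable hinj)
  -- Tᶜ is infinite (else S countable)
  have hTci : Tᶜ.Infinite := by
    intro hfin
    apply hc
    have : (univ : Set S).Countable := by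
      rw [← Set.union_compl_self T]
      exact hTc.union hfin.countable
    exact Set.countable_univ_iff.mp this
  -- pick minimal element of Tᶜ
  have hne : Tᶜ.Nonempty := hTci.nonempty
  set b := hwo.toIsWellFounded.wf.min Tᶜ hne with hbdef
  have hbTc : b ∈ Tᶜ := hwo.toIsWellFounded.wf.min_mem Tᶜ hne
  have hpred : {a | r a b}.Infinite := by
    simpa [hTdef] using hbTc
  have hnonpred : {a | ¬ r a b}.Infinite := by
    apply hTci.mono
    intro a ha
    exact hwo.toIsWellFounded.wf.not_lt_min Tᶜ ha
  have hF : (Subtype.val '' {a | r a b}).Infinite :=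
    hpred.image (Subtype.val_injective.injOn)
  have hG : (Subtype.val '' {a | ¬ r a b}).Infinite :=
    hnonpred.image (Subtype.val_injective.injOn)
  have := hSAU (closure (Subtype.val '' {a | r a b})) (closure (Subtype.val '' {a | ¬ r a b}))
    isClosed_closure isClosed_closure (hF.mono subset_closure) (hG.mono subset_closure)
  rw [hfree b] at this
  exact Set.not_nonempty_empty this
end

section
/- Transitivity of the forcing order on finite ∈-chains: Let 𝒮 be a collection of countable elementary submodels and suppose to each M ∈ 𝒮 is assigned a point y(M) and an open set U_{y(M)} containing y(M). For finite ∈-chains p ⊇ q of members of 𝒮, with W(q,N) = ⋂{U_{y(M)} : M ∈ q, y(N) ∈ U_{y(M)}}, define p < q iff p ⊇ q and for every M ∈ p \ q with M ∈ ⋃q, y(M) ∈ W(q,N) where N is the ∈-minimal element of q with M ∈ N. Then < is transitive (assuming the property that N ∈ M ∈ p implies y(M) ∉ U_{y(N)}). -/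
open Set

variable {S X : Type*}

/-- `W(q, N) = ⋂ {U M : M ∈ q, y N ∈ U M}`. -/
def Wset [TopologicalSpace X] (U : S → Set X) (y : S → X) (q : Finset S) (N : S) : Set X :=
  ⋂ M ∈ q, ⋂ (_ : y N ∈ U M), U M

/-- `p` is a finite `E`-chain: any two distinct members are `E`-comparable. -/
def IsEChain (E : S → S → Prop) (p : Finset S) : Prop :=
  ∀ M ∈ p, ∀ N ∈ p, M = N ∨ E M N ∨ E N M

/-- The forcing order on finite `E`-chains: `p < q` iff `p ⊇ q` and for every
`M ∈ p \ q` lying below some member of `q`, `y M ∈ W(q, N)` where `N` is the `E`-minimal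
member of `q` above `M`. -/
def ForcingLt [TopologicalSpace X] (E : S → S → Prop) (U : S → Set X) (y : S → X)
    (p q : Finset S) : Prop :=
  q ⊆ p ∧ ∀ M ∈ p, M ∉ q → ∀ N ∈ q, E M N →
    (∀ K ∈ q, E M K → K = N ∨ E N K) → y M ∈ Wset U y q N

/-- Any nonempty finite set has an `E`-minimal element when `E` is transitive and
asymmetric. -/
lemma exists_E_minimal (E : S → S → Prop) [IsTrans S E] [IsAsymm S E]
    (s : Finset S) (hs : s.Nonempty) : ∃ m ∈ s, ∀ x ∈ s, ¬ E x m := by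
  classical
  induction s using Finset.induction_on with
  | empty => exact absurd hs (by simp)
  | @insert a s ha ih =>
    rcases s.eq_empty_or_nonempty with rfl | hsne
    · exact ⟨a, by simp, by intro x hx; simp at hx; subst hx; exact fun h => asymm h h⟩
    · obtain ⟨m, hm, hmin⟩ := ih hsne
      by_cases hE : E a m
      · refine ⟨a, by simp, ?_⟩
        intro x hx hxa
        rcases Finset.mem_insert.mp hx with rfl | hxs
        · exact asymm hxa hxa
        · exact hmin x hxs (Trans.trans hxa hE)
      · refine ⟨m, Finset.mem_insert_of_mem hm, ?_⟩
        intro x hx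
        rcases Finset.mem_insert.mp hx with rfl | hxs
        · exact hE
        · exact hmin x hxs

/-- transitivity of the forcing order on finite `E`-chains, assuming the
membership-like relation `E` is transitive and asymmetric, each `U M` is an open set
containing `y M`, and `E N M` implies `y M ∉ U N`. -/
theorem forcingLt_trans [TopologicalSpace X] (E : S → S → Prop)
    [IsTrans S E] [IsAsymm S E] (U : S → Set X) (y : S → X)
    (hUo : ∀ M, IsOpen (U M)) (hyU : ∀ M, y M ∈ U M)
    (hmono : ∀ M N, E N M → y M ∉ U N)
    (p q r : Finset S) (hp : IsEChain E p) (hq : IsEChain E q) (hr : IsEChain E r)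
    (hrp : ForcingLt E U y r p) (hpq : ForcingLt E U y p q) :
    ForcingLt E U y r q := by
  classical
  obtain ⟨hpr, hrp2⟩ := hrp
  obtain ⟨hqp, hpq2⟩ := hpq
  refine ⟨hqp.trans hpr, ?_⟩
  intro M hMr hMq N hNq hMN hNmin
  by_cases hMp : M ∈ p
  · exact hpq2 M hMp hMq N hNq hMN hNmin
  · -- M ∈ r \ p. Choose the E-minimal N' ∈ p above M.
    have hNp : N ∈ p := hqp hNq
    obtain ⟨N', hN's, hN'min⟩ :=
      exists_E_minimal E (p.filter (fun K => E M K)) ⟨N, by simp [hNq, hNp, hMN]⟩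
    rw [Finset.mem_filter] at hN's
    obtain ⟨hN'p, hMN'⟩ := hN's
    have hN'minp : ∀ K ∈ p, E M K → K = N' ∨ E N' K := by
      intro K hKp hMK
      have hKs : K ∈ p.filter (fun K => E M K) := by simp [hKp, hMK]
      rcases hp K hKp N' hN'p with h | h | h
      · exact Or.inl h
      · exact absurd h (hN'min K hKs)
      · exact Or.inr h
    have hMW : y M ∈ Wset U y p N' := hrp2 M hMr hMp N' hN'p hMN' hN'minp
    -- N' = N or E N' N
    have hN'N : N' = N ∨ E N' N := by
      rcases hN'minp N hNp hMN with h | h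
      · exact Or.inl h.symm
      · exact Or.inr h
    -- y N' ∈ Wset U y q N
    have hN'W : y N' ∈ Wset U y q N := by
      rcases hN'N with rfl | hE
      · simp only [Wset, mem_iInter]
        intro K hKq hNK
        exact hNK
      · have hN'q : N' ∉ q := by
          intro hN'q
          rcases hNmin N' hN'q hMN' with rfl | h
          · exact asymm hE hE
          · exact asymm hE h
        have hNminN' : ∀ K ∈ q, E N' K → K = N ∨ E N K := by
          intro K hKq hN'K
          exact hNmin K hKq (Trans.trans hMN' hN'K)
        exact hpq2 N' hN'p hN'q N hNq hE hNminN'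
    simp only [Wset, mem_iInter] at hMW hN'W ⊢
    intro K hKq hNK
    exact hMW K (hqp hKq) (hN'W K hKq hNK)
end

section
/- If S = {y_α : α < ω₁} is a subset of a space X indexed injectively and increasingly by ω₁ such that for every α < ω₁ there are an open set U_α ∋ y_α and a set A_α with closure(U_α) ∩ closure(A_α) = ∅, and such that {y_β : β < α} ⊆ U_α while {y_β : β > α} ⊆ closure(A_α), then the set S⁺ = {y_{α+1} : α < ω₁} of successor-indexed points is free in X (in the reverse order): for every α, the closure of {y_{β+1} : β ≥ α} is disjoint from the closure of {y_{β+1} : β < α}. -/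
open Set

noncomputable def omega1 : Ordinal.{0} := (Cardinal.aleph 1).ord

/-- if `⟨y_α : α < ω₁⟩` is injective and for every `α < ω₁` there are an
open `U_α ∋ y_α` and a set `A_α` with disjoint closures such that all earlier points lie
in `U_α` and all later points lie in `closure (A_α)`, then the set of successor-indexed
points `{y_{α+1}}` is free in the reverse order: for every `α`, the closure of
`{y_{β+1} : α ≤ β < ω₁}` is disjoint from the closure of `{y_{β+1} : β < α}`. -/
theorem successor_points_free {X : Type*} [TopologicalSpace X]
    (y : Ordinal.{0} → X) (U A : Ordinal.{0} → Set X)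
    (hinj : Set.InjOn y (Set.Iio omega1))
    (hUo : ∀ α < omega1, IsOpen (U α))
    (hyU : ∀ α < omega1, y α ∈ U α)
    (hdisj : ∀ α < omega1, closure (U α) ∩ closure (A α) = ∅)
    (hbelow : ∀ α < omega1, ∀ β < α, y β ∈ U α)
    (habove : ∀ α < omega1, ∀ β < omega1, α < β → y β ∈ closure (A α)) :
    ∀ α < omega1,
      closure ((fun β => y (β + 1)) '' {β | α ≤ β ∧ β < omega1}) ∩
        closure ((fun β => y (β + 1)) '' {β | β < α}) = ∅ := by
  intro α hα
  have hlim : Order.IsSuccLimit omega1 := Cardinal.isSuccLimit_ord (Cardinal.aleph0_le_aleph 1)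
  have hsucc : ∀ β < omega1, β + 1 < omega1 := by
    intro β hβ
    exact (Ordinal.add_one_eq_succ β ▸ hlim.succ_lt hβ)
  -- later points lie in closure (A α)
  have h1 : (fun β => y (β + 1)) '' {β | α ≤ β ∧ β < omega1} ⊆ closure (A α) := by
    rintro x ⟨β, ⟨hαβ, hβ⟩, rfl⟩
    exact habove α hα (β + 1) (hsucc β hβ) (lt_of_le_of_lt hαβ (lt_add_one β))
  -- earlier points lie in U α
  have h2 : (fun β => y (β + 1)) '' {β | β < α} ⊆ U α := by
    rintro x ⟨β, hβ, rfl⟩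
    have : β + 1 ≤ α := by
      exact (Ordinal.add_one_eq_succ β ▸ Order.succ_le_of_lt (hβ : β < α))
    rcases this.lt_or_eq with h | h
    · exact hbelow α hα (β + 1) h
    · show y (β + 1) ∈ U α; rw [h]; exact hyU α hα
  have c1 : closure ((fun β => y (β + 1)) '' {β | α ≤ β ∧ β < omega1}) ⊆ closure (A α) := by
    simpa using closure_mono h1
  have c2 : closure ((fun β => y (β + 1)) '' {β | β < α}) ⊆ closure (U α) :=
    closure_mono h2
  apply Set.eq_empty_of_subset_empty
  rw [← hdisj α hα]
  exact fun x ⟨hx1, hx2⟩ => ⟨c2 hx2, c1 hx1⟩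
end
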